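/- Every acyclic induced subdigraph of D_n' has underlying undirected graph with clique number at most 2 (i.e., is triangle-free). -/
import Mathlib


/-- Vertex set of the digraph `D (n+1)` from the paper (`Vtx n` = vertices of `D_{n+1}`). -/
def Vtx : ℕ → Type
  | 0 => Unit
  | (n+1) => (Fin (n+1) × Vtx n) ⊕ ((i : Fin (n+1)) → Vtx n)

/-- Edge relation of `D_{n+1}`. -/
def DEdge : (n : ℕ) → Vtx n → Vtx n → Prop
  | 0, _, _ => False
  | (n+1), Sum.inl (i, x), Sum.inl (j, y) => i = j ∧ DEdge n x y
  | (n+1), Sum.inl (i, x), Sum.inr T => T i = x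
  | (_+1), Sum.inr _, _ => False

/-- There is a directed walk of length `k` from `u` to `v`. -/
def WalkLen {V : Type*} (E : V → V → Prop) (u v : V) (k : ℕ) : Prop :=
  ∃ f : Fin (k+1) → V, f 0 = u ∧ f (Fin.last k) = v ∧
    ∀ i : Fin k, E (f i.castSucc) (f i.succ)

/-- `l` is a directed path (as a list of distinct vertices) from `u` to `v`. -/
def IsDPath {V : Type*} (E : V → V → Prop) (u v : V) (l : List V) : Prop :=
  l.Chain' E ∧ l.Nodup ∧ l.head? = some u ∧ l.getLast? = some v

/-- Positive edges of `D'`. -/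
def PosE {V : Type*} (E : V → V → Prop) (u v : V) : Prop :=
  ∃ k, k % 3 = 1 ∧ WalkLen E u v k

/-- Negative edges of `D'`. -/
def NegE {V : Type*} (E : V → V → Prop) (u v : V) : Prop :=
  ∃ k, k % 3 = 2 ∧ WalkLen E v u k

/-- Edge relation of `D_{n+1}'`. -/
def DEdge' (n : ℕ) (u v : Vtx n) : Prop :=
  PosE (DEdge n) u v ∨ NegE (DEdge n) u v

/-- Underlying undirected graph of a digraph. -/
def underSG {V : Type*} (E : V → V → Prop) : SimpleGraph V :=
  SimpleGraph.fromRel E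

/-- `G_{n+1}`, the underlying undirected graph of `D_{n+1}'`. -/
def Gn (n : ℕ) : SimpleGraph (Vtx n) := underSG (DEdge' n)

/-- A digraph is acyclic iff no vertex lies on a directed cycle. -/
def DAcyclic {V : Type*} (E : V → V → Prop) : Prop :=
  ∀ v : V, ¬ Relation.TransGen E v v

/-- `k`-dicolorability. -/
def Dicolorable {V : Type*} (E : V → V → Prop) (k : ℕ) : Prop :=
  ∃ f : V → Fin k, ∀ c : Fin k,
    DAcyclic (fun a b => E a b ∧ f a = c ∧ f b = c)

/-- `D` has an induced directed cycle of odd length at least 5. -/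
def HasInducedOddCycle {V : Type*} (E : V → V → Prop) : Prop :=
  ∃ m : ℕ, 5 ≤ m ∧ Odd m ∧ ∃ f : ZMod m → V, Function.Injective f ∧
    (∀ i, E (f i) (f (i+1))) ∧ (∀ i j, E (f i) (f j) → j = i + 1)
section Walks
variable {V : Type*} {E : V → V → Prop}

theorem walkLen_zero {u v : V} : WalkLen E u v 0 ↔ u = v := by
  constructor
  · rintro ⟨f, h0, hl, _⟩
    rw [← h0, ← hl]
    congr 1
  · rintro rfl
    exact ⟨fun _ => u, rfl, rfl, fun i => i.elim0⟩

theorem walkLen_succ {u v : V} {k : ℕ} :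
    WalkLen E u v (k+1) ↔ ∃ w, E u w ∧ WalkLen E w v k := by
  constructor
  · rintro ⟨f, h0, hl, hc⟩
    refine ⟨f ((0 : Fin (k+1)).succ), ?_, fun i => f i.succ, rfl, ?_, fun i => ?_⟩
    · have := hc 0
      simpa [h0] using this
    · simpa using hl
    · have := hc i.succ
      rwa [← Fin.succ_castSucc] at this
  · rintro ⟨w, he, f, h0, hl, hc⟩
    refine ⟨Fin.cases u f, by simp, ?_, fun i => ?_⟩
    · rw [← Fin.succ_last]
      simp only [Fin.cases_succ]
      exact hl
    · induction i using Fin.cases with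
      | zero =>
        simp only [Fin.castSucc_zero, Fin.cases_zero, Fin.cases_succ, h0]
        exact he
      | succ j =>
        simp only [← Fin.succ_castSucc, Fin.cases_succ]
        exact hc j

theorem walkLen_trans {u v w : V} {k l : ℕ} (h1 : WalkLen E u v k)
    (h2 : WalkLen E v w l) : WalkLen E u w (k + l) := by
  induction k generalizing u with
  | zero => rw [walkLen_zero] at h1; subst h1; simpa using h2
  | succ k ih =>
    rw [walkLen_succ] at h1
    obtain ⟨x, he, hx⟩ := h1
    have h3 : WalkLen E u w (k + l + 1) := walkLen_succ.mpr ⟨x, he, ih hx⟩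
    rwa [show k + l + 1 = k + 1 + l by omega] at h3

end Walks

theorem walk_from_inr {n : ℕ} {T : (i : Fin (n+1)) → Vtx n} {v : Vtx (n+1)} {k : ℕ}
    (h : WalkLen (DEdge (n+1)) (Sum.inr T) v k) : k = 0 ∧ v = Sum.inr T := by
  cases k with
  | zero => exact ⟨rfl, (walkLen_zero.mp h).symm⟩
  | succ k =>
    obtain ⟨w, he, -⟩ := walkLen_succ.mp h
    exact absurd he (by simp [DEdge])

theorem walk_inl_inl {n : ℕ} {i j : Fin (n+1)} {x y : Vtx n} {k : ℕ}
    (h : WalkLen (DEdge (n+1)) (Sum.inl (i, x)) (Sum.inl (j, y)) k) :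
    i = j ∧ WalkLen (DEdge n) x y k := by
  induction k generalizing x with
  | zero =>
    have := walkLen_zero.mp h
    injection this with h'
    injection h' with h1 h2
    exact ⟨h1, by rw [h2]; exact walkLen_zero.mpr rfl⟩
  | succ k ih =>
    obtain ⟨w, he, hw⟩ := walkLen_succ.mp h
    match w with
    | Sum.inl (i', x') =>
      obtain ⟨rfl, hx⟩ : i = i' ∧ DEdge n x x' := he
      obtain ⟨h1, h2⟩ := ih hw
      exact ⟨h1, walkLen_succ.mpr ⟨x', hx, h2⟩⟩
    | Sum.inr T => exact absurd (walk_from_inr hw).2 (by simp)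

theorem walk_inl_inr {n : ℕ} {i : Fin (n+1)} {x : Vtx n} {T : (i : Fin (n+1)) → Vtx n} {k : ℕ}
    (h : WalkLen (DEdge (n+1)) (Sum.inl (i, x)) (Sum.inr T) k) :
    ∃ k', k = k' + 1 ∧ WalkLen (DEdge n) x (T i) k' := by
  induction k generalizing x with
  | zero => exact absurd (walkLen_zero.mp h) (by simp)
  | succ k ih =>
    obtain ⟨w, he, hw⟩ := walkLen_succ.mp h
    match w with
    | Sum.inl (i', x') =>
      obtain ⟨rfl, hx⟩ : i = i' ∧ DEdge n x x' := he
      obtain ⟨k', rfl, h2⟩ := ih hw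
      exact ⟨k' + 1, rfl, walkLen_succ.mpr ⟨x', hx, h2⟩⟩
    | Sum.inr T' =>
      obtain ⟨hk, hv⟩ := walk_from_inr hw
      injection hv with hTT
      have hT : T i = x := by rw [hTT]; exact he
      exact ⟨0, by omega, by rw [hT]; exact walkLen_zero.mpr rfl⟩

theorem walk_unique : ∀ (n : ℕ) (u v : Vtx n) (k l : ℕ),
    WalkLen (DEdge n) u v k → WalkLen (DEdge n) u v l → k = l := by
  intro n
  induction n with
  | zero =>
    have key : ∀ (u v : Vtx 0) k, WalkLen (DEdge 0) u v k → k = 0 := by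
      intro u v k h
      cases k with
      | zero => rfl
      | succ k => obtain ⟨w, he, -⟩ := walkLen_succ.mp h; exact absurd he (by simp [DEdge])
    intro u v k l h1 h2
    rw [key u v k h1, key u v l h2]
  | succ n ih =>
    rintro (⟨i, x⟩ | T) v k l h1 h2
    · match v with
      | Sum.inl (j, y) => exact ih x y k l (walk_inl_inl h1).2 (walk_inl_inl h2).2
      | Sum.inr T =>
        obtain ⟨k', rfl, hk⟩ := walk_inl_inr h1
        obtain ⟨l', rfl, hl⟩ := walk_inl_inr h2
        rw [ih x (T i) k' l' hk hl]
    · rw [(walk_from_inr h1).1, (walk_from_inr h2).1]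

theorem walk_self {n : ℕ} {u : Vtx n} {k : ℕ} (h : WalkLen (DEdge n) u u k) : k = 0 :=
  walk_unique n u u k 0 h (walkLen_zero.mpr rfl)

theorem no_transitive {n : ℕ} {u v w : Vtx n} (h1 : DEdge' n u v) (h2 : DEdge' n v w)
    (h3 : DEdge' n u w) : False := by
  rcases h1 with ⟨a, ha, w1⟩ | ⟨a, ha, w1⟩ <;>
    rcases h2 with ⟨b, hb, w2⟩ | ⟨b, hb, w2⟩ <;>
      rcases h3 with ⟨c, hc, w3⟩ | ⟨c, hc, w3⟩
  · -- u⇒v a, v⇒w b, u⇒w c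
    have := walk_unique n u w (a + b) c (walkLen_trans w1 w2) w3; omega
  · -- u⇒v a, v⇒w b, w⇒u c : cycle
    have := walk_self (walkLen_trans (walkLen_trans w1 w2) w3); omega
  · -- u⇒v a, w⇒v b, u⇒w c
    have := walk_unique n u v (c + b) a (walkLen_trans w3 w2) w1; omega
  · -- u⇒v a, w⇒v b, w⇒u c
    have := walk_unique n w v (c + a) b (walkLen_trans w3 w1) w2; omega
  · -- v⇒u a, v⇒w b, u⇒w c
    have := walk_unique n v w (a + c) b (walkLen_trans w1 w3) w2; omega
  · -- v⇒u a, v⇒w b, w⇒u c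
    have := walk_unique n v u (b + c) a (walkLen_trans w2 w3) w1; omega
  · -- v⇒u a, w⇒v b, u⇒w c : cycle
    have := walk_self (walkLen_trans (walkLen_trans w3 w2) w1); omega
  · -- v⇒u a, w⇒v b, w⇒u c
    have := walk_unique n w u (b + a) c (walkLen_trans w2 w1) w3; omega

/-- every acyclic induced subdigraph of `D_n'` has triangle-free
underlying graph. -/
theorem Dn'_acyclic_triangle_free (n : ℕ) (S : Set (Vtx n))
    (hS : DAcyclic (fun a b : S => DEdge' n a b)) :
    ∀ s : Finset S, ¬ ((Gn n).induce S).IsNClique 3 s := by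
  classical
  intro s h
  obtain ⟨a, b, c, hab, hac, hbc, rfl⟩ := Finset.card_eq_three.mp h.card_eq
  have key : ∀ x y : S, ((Gn n).induce S).Adj x y →
      DEdge' n ↑x ↑y ∨ DEdge' n ↑y ↑x := by
    intro x y hxy
    have : (Gn n).Adj ↑x ↑y := hxy
    rw [Gn, underSG, SimpleGraph.fromRel_adj] at this
    exact this.2
  have e1 := key a b (h.isClique (by simp) (by simp) hab)
  have e2 := key a c (h.isClique (by simp) (by simp) hac)
  have e3 := key b c (h.isClique (by simp) (by simp) hbc)
  have cyc : ∀ x y z : S, DEdge' n ↑x ↑y → DEdge' n ↑y ↑z → DEdge' n ↑z ↑x → False := by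
    intro x y z hxy hyz hzx
    exact hS x (((Relation.TransGen.single (b := y) hxy).tail (hyz)).tail hzx)
  rcases e1 with e1 | e1 <;> rcases e2 with e2 | e2 <;> rcases e3 with e3 | e3
  · exact no_transitive e1 e3 e2
  · exact no_transitive e2 e3 e1
  · exact cyc a b c e1 e3 e2
  · exact no_transitive e2 e1 e3
  · exact no_transitive e1 e2 e3
  · exact cyc a c b e2 e3 e1
  · exact no_transitive e3 e2 e1
  · exact no_transitive e3 e1 e2
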